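/- (Mass balance after stabilization) Consider the splitting model on Z^d (d ≥ 1) with any valid splitting order, h < 1, n ≥ 0, and suppose the model stabilizes. Then for every site x the limit η_∞(x) = lim_{t→∞} η_t(x) exists, η_∞(x) < 1 for all x, η_∞(x) ≥ 0 for all x ∈ T, and the mass balance identity Δu(x) + (n−h)·δ_{0,x} = η_∞(x) − h holds for all x, i.e. η_∞(x) = η_0(x) + (1/(2d))·Σ_{y∼x} u(y) − u(x). -/

import Mathlib

open scoped BigOperators

/-- The nearest neighbor of `x ∈ ℤ^d` obtained by shifting coordinate `i` by `ε`. -/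
def nbr {d : ℕ} (x : Fin d → ℤ) (i : Fin d) (ε : ℤ) : Fin d → ℤ :=
  Function.update x i (x i + ε)

/-- Nearest-neighbor adjacency in `ℤ^d`. -/
def Adj {d : ℕ} (x y : Fin d → ℤ) : Prop :=
  (∑ i, |x i - y i|) = 1

/-- The splitting model on `ℤ^d` with initial mass `n` at the origin and background
mass `h` at every other site, together with a splitting order: `S (t+1)` is the set
of sites that split at time `t+1` (a subset of the sites unstable at time `t`,
i.e. those of mass `≥ 1`), and the mass `η` evolves by Zhang's toppling rule:
a splitting site loses all its mass, distributing a fraction `1/(2d)` of it to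
each of its `2d` nearest neighbors. -/
structure SplittingModel (d : ℕ) (n h : ℝ) where
  η : ℕ → (Fin d → ℤ) → ℝ
  S : ℕ → Set (Fin d → ℤ)
  init_origin : η 0 0 = n
  init_other : ∀ x : Fin d → ℤ, x ≠ 0 → η 0 x = h
  S_zero : S 0 = ∅
  S_subset : ∀ t, S (t + 1) ⊆ {x | 1 ≤ η t x}
  evolve : ∀ t x, η (t + 1) x =
      (S (t + 1))ᶜ.indicator (η t) x
        + (1 / (2 * (d : ℝ))) * ∑ i : Fin d,
            ((S (t + 1)).indicator (η t) (nbr x i 1)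
              + (S (t + 1)).indicator (η t) (nbr x i (-1)))

namespace SplittingModel

variable {d : ℕ} {n h : ℝ}

/-- A valid splitting order: some unstable site splits whenever there is an unstable
site, and every site that is unstable at some time eventually splits. -/
def Valid (M : SplittingModel d n h) : Prop :=
  (∀ t, {x | 1 ≤ M.η t x}.Nonempty → (M.S (t + 1)).Nonempty) ∧
    (∀ t x, 1 ≤ M.η t x → ∃ t₀, 1 ≤ t₀ ∧ x ∈ M.S (t + t₀))

/-- The parallel splitting order (the splitting automaton): at every time step,
every unstable site splits. -/
def Parallel (M : SplittingModel d n h) : Prop :=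
  ∀ t, M.S (t + 1) = {x | 1 ≤ M.η t x}

/-- The set of sites that split at least once up to (and including) time `t`. -/
def Tt (M : SplittingModel d n h) (t : ℕ) : Set (Fin d → ℤ) :=
  ⋃ t' ∈ Set.Icc 1 t, M.S t'

/-- The set of sites that split at least once. -/
def T (M : SplittingModel d n h) : Set (Fin d → ℤ) :=
  ⋃ t, M.S t

/-- The model stabilizes: every site splits only finitely many times. -/
def Stabilizes (M : SplittingModel d n h) : Prop :=
  ∀ x, {t | x ∈ M.S t}.Finite

/-- The total mass `u x` emitted from the site `x` during stabilization. -/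
noncomputable def emit (M : SplittingModel d n h) (x : Fin d → ℤ) : ℝ :=
  ∑' t : ℕ, (M.S (t + 1)).indicator (M.η t) x

end SplittingModel

/-- The cube `Q_k(x) = {y ∈ ℤ^d : max_i |x i - y i| ≤ k}` centered at `x` with
radius `k`. -/
noncomputable def Qcube {d : ℕ} (k : ℕ) (x : Fin d → ℤ) : Finset (Fin d → ℤ) :=
  Finset.Icc (fun i => x i - k) (fun i => x i + k)

/-- The discrete Laplacian `Δf(x) = (1/(2d)) ∑_{y ∼ x} f y - f x`. -/
noncomputable def lap {d : ℕ} (f : (Fin d → ℤ) → ℝ) (x : Fin d → ℤ) : ℝ :=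
  (1 / (2 * (d : ℝ))) * (∑ i : Fin d, (f (nbr x i 1) + f (nbr x i (-1)))) - f x


/-!
Write `e_t = 1_{S (t+1)} η_t` for the mass emitted at step `t`. The splitting rule reads
`η_{t+1} = η_t + Δ e_t`, so `η_T = η_0 + Δ (∑_{t<T} e_t)`. Once neither `x` nor any of its
neighbours splits any more (which happens at a finite time under stabilization), the partial
sums agree with `u` on the closed neighbourhood of `x`, so `η_t(x)` is eventually constant,
equal to `η_0(x) + Δu(x)`. A site that is still unstable would split again by validity, so
this final value is `< 1`; and a site that has split once holds only received mass afterwards,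
hence stays nonnegative.
-/

open Filter Finset

section Laplacian

variable {d : ℕ}

def closedNbhd (x : Fin d → ℤ) : Set (Fin d → ℤ) :=
  insert x (Set.range (fun i => nbr x i 1) ∪ Set.range (fun i => nbr x i (-1)))

lemma finite_closedNbhd (x : Fin d → ℤ) : (closedNbhd x).Finite :=
  ((Set.finite_range _).union (Set.finite_range _)).insert x

lemma lap_congr {f g : (Fin d → ℤ) → ℝ} {x : Fin d → ℤ} (hfg : Set.EqOn f g (closedNbhd x)) :
    lap f x = lap g x := by
  have hx : f x = g x := hfg (Set.mem_insert x _)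
  have hnbr : ∀ i ε, (ε = 1 ∨ ε = -1) → f (nbr x i ε) = g (nbr x i ε) := by
    rintro i ε (rfl | rfl)
    · exact hfg (Or.inr (Or.inl ⟨i, rfl⟩))
    · exact hfg (Or.inr (Or.inr ⟨i, rfl⟩))
  simp only [lap, hx, hnbr _ 1 (Or.inl rfl), hnbr _ (-1) (Or.inr rfl)]

lemma lap_sum {ι : Type*} (s : Finset ι) (f : ι → (Fin d → ℤ) → ℝ) (x : Fin d → ℤ) :
    lap (fun y => ∑ k ∈ s, f k y) x = ∑ k ∈ s, lap (f k) x := by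
  simp only [lap, ← sum_add_distrib]
  rw [sum_comm, mul_sum, sum_sub_distrib]

end Laplacian

namespace SplittingModel

variable {d : ℕ} {n h : ℝ} (M : SplittingModel d n h)

noncomputable def emitAt (t : ℕ) : (Fin d → ℤ) → ℝ :=
  (M.S (t + 1)).indicator (M.η t)

lemma emitAt_nonneg (t : ℕ) (x : Fin d → ℤ) : 0 ≤ M.emitAt t x :=
  Set.indicator_nonneg (fun _ hy => zero_le_one.trans (M.S_subset t hy)) x

lemma η_succ (t : ℕ) (x : Fin d → ℤ) : M.η (t + 1) x = M.η t x + lap (M.emitAt t) x := by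
  rw [M.evolve, lap, emitAt, ← Set.indicator_self_add_compl_apply (M.S (t + 1)) (M.η t) x]
  ring

lemma η_eq_add_sum_lap (T : ℕ) (x : Fin d → ℤ) :
    M.η T x = M.η 0 x + ∑ t ∈ range T, lap (M.emitAt t) x := by
  induction T with
  | zero => simp
  | succ T ih => rw [sum_range_succ, η_succ, ih, add_assoc]

lemma indicator_compl_le_η_succ (t : ℕ) (x : Fin d → ℤ) :
    (M.S (t + 1))ᶜ.indicator (M.η t) x ≤ M.η (t + 1) x := by
  rw [M.evolve]
  refine le_add_of_nonneg_right (mul_nonneg (by positivity) (sum_nonneg fun i _ => ?_))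
  exact add_nonneg (M.emitAt_nonneg t _) (M.emitAt_nonneg t _)

lemma η_nonneg_of_mem_S {t : ℕ} {x : Fin d → ℤ} (hx : x ∈ M.S t) {r : ℕ} (hr : t ≤ r) :
    0 ≤ M.η r x := by
  obtain ⟨s, rfl⟩ : ∃ s, t = s + 1 := by
    cases t with
    | zero => simp [M.S_zero] at hx
    | succ s => exact ⟨s, rfl⟩
  induction r, hr using Nat.le_induction with
  | base =>
    refine le_trans (le_of_eq ?_) (M.indicator_compl_le_η_succ s x)
    exact (Set.indicator_of_notMem (Set.notMem_compl_iff.2 hx) _).symm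
  | succ r _ ih =>
    exact (Set.indicator_nonneg (fun _ _ => ih) x).trans (M.indicator_compl_le_η_succ r x)

lemma emit_eq_sum_range {y : Fin d → ℤ} {T : ℕ} (hy : ∀ t ≥ T, y ∉ M.S (t + 1)) :
    M.emit y = ∑ t ∈ range T, M.emitAt t y :=
  tsum_eq_sum fun t ht => Set.indicator_of_notMem (hy t (by simpa using ht)) _

variable {M} in
lemma Stabilizes.eventually_forall_notMem (hstab : M.Stabilizes) {s : Set (Fin d → ℤ)}
    (hs : s.Finite) : ∀ᶠ t in atTop, ∀ y ∈ s, y ∉ M.S t :=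
  (eventually_all_finite hs).2 fun y _ => by
    simpa [← Nat.cofinite_eq_atTop, eventually_cofinite] using hstab y

noncomputable def ηInf (x : Fin d → ℤ) : ℝ :=
  M.η 0 x + lap M.emit x

lemma eventually_η_eq_ηInf (hstab : M.Stabilizes) (x : Fin d → ℤ) :
    ∀ᶠ t in atTop, M.η t x = M.ηInf x := by
  filter_upwards [eventually_forall_ge_atTop.2
    (hstab.eventually_forall_notMem (finite_closedNbhd x))] with T hT
  have hemit : Set.EqOn M.emit (fun y => ∑ t ∈ range T, M.emitAt t y) (closedNbhd x) :=
    fun y hy => M.emit_eq_sum_range fun t ht => hT (t + 1) (by omega) y hy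
  rw [ηInf, lap_congr hemit, lap_sum, η_eq_add_sum_lap]

lemma ηInf_lt_one (hM : M.Valid) (hstab : M.Stabilizes) (x : Fin d → ℤ) : M.ηInf x < 1 := by
  by_contra! hge
  obtain ⟨T, hηT, hquiet⟩ := ((M.eventually_η_eq_ηInf hstab x).and (eventually_forall_ge_atTop.2
    (hstab.eventually_forall_notMem (Set.finite_singleton x)))).exists
  obtain ⟨t₀, -, hsplit⟩ := hM.2 T x (hηT ▸ hge)
  exact hquiet (T + t₀) (by omega) x rfl hsplit

lemma ηInf_nonneg_of_mem_T (hstab : M.Stabilizes) {x : Fin d → ℤ} (hx : x ∈ M.T) :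
    0 ≤ M.ηInf x := by
  obtain ⟨t, hxt⟩ := Set.mem_iUnion.1 hx
  obtain ⟨r, hηr, hr⟩ := ((M.eventually_η_eq_ηInf hstab x).and (eventually_ge_atTop t)).exists
  exact hηr ▸ M.η_nonneg_of_mem_S hxt hr

end SplittingModel

theorem mass_balance_general {d : ℕ} {n h : ℝ}
    (M : SplittingModel d n h) (hM : M.Valid) (hstab : M.Stabilizes) :
    ∃ ηinf : (Fin d → ℤ) → ℝ,
      (∀ x, Filter.Tendsto (fun t => M.η t x) Filter.atTop (nhds (ηinf x))) ∧
      (∀ x, ηinf x < 1) ∧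
      (∀ x ∈ M.T, 0 ≤ ηinf x) ∧
      (∀ x, lap M.emit x + (n - h) * (if x = 0 then (1 : ℝ) else 0) = ηinf x - h) ∧
      (∀ x, ηinf x = M.η 0 x
          + (1 / (2 * (d : ℝ))) * (∑ i : Fin d, (M.emit (nbr x i 1) + M.emit (nbr x i (-1))))
          - M.emit x) := by
  refine ⟨M.ηInf, fun x => tendsto_nhds_of_eventually_eq (M.eventually_η_eq_ηInf hstab x),
    M.ηInf_lt_one hM hstab, fun x hx => M.ηInf_nonneg_of_mem_T hstab hx, fun x => ?_,
    fun x => by rw [SplittingModel.ηInf, lap]; ring⟩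
  by_cases hx : x = 0
  · rw [if_pos hx, SplittingModel.ηInf, hx, M.init_origin]
    ring
  · rw [if_neg hx, SplittingModel.ηInf, M.init_other x hx]
    ring

/-- Mass balance after stabilization: for the splitting model on `ℤ^d` with any
valid splitting order, `h < 1`, `n ≥ 0`, assuming the model stabilizes, the limit
configuration `η_∞` exists pointwise, is everywhere `< 1`, is nonnegative on `T`,
and satisfies `Δu(x) + (n-h)δ_{0,x} = η_∞(x) - h`, i.e.
`η_∞(x) = η_0(x) + (1/(2d)) ∑_{y ∼ x} u y - u x`. -/
theorem mass_balance {d : ℕ} (hd : 1 ≤ d) {n h : ℝ}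
    (hh : h < 1) (hn : 0 ≤ n)
    (M : SplittingModel d n h) (hM : M.Valid) (hstab : M.Stabilizes) :
    ∃ ηinf : (Fin d → ℤ) → ℝ,
      (∀ x, Filter.Tendsto (fun t => M.η t x) Filter.atTop (nhds (ηinf x))) ∧
      (∀ x, ηinf x < 1) ∧
      (∀ x ∈ M.T, 0 ≤ ηinf x) ∧
      (∀ x, lap M.emit x + (n - h) * (if x = 0 then (1 : ℝ) else 0) = ηinf x - h) ∧
      (∀ x, ηinf x = M.η 0 x
          + (1 / (2 * (d : ℝ))) * (∑ i : Fin d, (M.emit (nbr x i 1) + M.emit (nbr x i (-1))))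
          - M.emit x) :=
  mass_balance_general M hM hstab
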